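/- Define the misassignment error Err^G(θ) := |{x ∈ Ω : F_θ(x) ≠ G(x)}| / |Ω|. Then for all θ, Φ^G_ε(θ) ≤ -(log 2)·Err^G(θ). Consequently, for any δ > 0, if Φ^G_ε(θ) > -δ then Err^G(θ) < δ/log 2; and if furthermore δ < (log 2)/|Ω|, then Φ^G_ε(θ) > -δ implies F_θ(x) = G(x) for all x ∈ Ω. -/
import Mathlib


open Matrix Real

/-- Softmax (smeared-out) assignment probabilities for a linear PMD. -/
noncomputable def softp {Ω : Type*} [Fintype Ω] {K N : ℕ}
    (η : Ω → Fin K → ℝ) (ε : ℝ) (θ : Fin N → Fin K → ℝ) (i : Fin N) (x : Ω) : ℝ :=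
  Real.exp (-(θ i ⬝ᵥ η x) / ε) / ∑ j, Real.exp (-(θ j ⬝ᵥ η x) / ε)

/-- The multinomial logistic objective Φ^G_ε. -/
noncomputable def Phi {Ω : Type*} [Fintype Ω] {K N : ℕ}
    (η : Ω → Fin K → ℝ) (G : Ω → Fin N) (ε : ℝ) (θ : Fin N → Fin K → ℝ) : ℝ :=
  (1 / (Fintype.card Ω : ℝ)) * ∑ x, Real.log (softp η ε θ (G x) x)

/-- Hard assignment: smallest index minimizing `i ↦ θ i ⬝ᵥ η x`. -/
noncomputable def hardF {Ω : Type*} {K N : ℕ} [NeZero N]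
    (η : Ω → Fin K → ℝ) (θ : Fin N → Fin K → ℝ) (x : Ω) : Fin N :=
  (Finset.univ.filter (fun i => ∀ j, θ i ⬝ᵥ η x ≤ θ j ⬝ᵥ η x)).min'
    (by
      obtain ⟨i, _, hi⟩ := Finset.exists_min_image Finset.univ
        (fun i => θ i ⬝ᵥ η x)
        ⟨⟨0, Nat.pos_of_ne_zero (NeZero.ne N)⟩, Finset.mem_univ _⟩
      exact ⟨i, Finset.mem_filter.mpr ⟨Finset.mem_univ _, fun j => hi j (Finset.mem_univ j)⟩⟩)

/-- The fraction of misassigned pixels. -/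
noncomputable def Err {Ω : Type*} [Fintype Ω] {K N : ℕ} [NeZero N]
    (η : Ω → Fin K → ℝ) (G : Ω → Fin N) (θ : Fin N → Fin K → ℝ) : ℝ :=
  ((Finset.univ.filter (fun x : Ω => hardF η θ x ≠ G x)).card : ℝ) / (Fintype.card Ω : ℝ)

lemma hardF_min {Ω : Type*} {K N : ℕ} [NeZero N]
    (η : Ω → Fin K → ℝ) (θ : Fin N → Fin K → ℝ) (x : Ω) (j : Fin N) :
    θ (hardF η θ x) ⬝ᵥ η x ≤ θ j ⬝ᵥ η x := by
  have hne : (Finset.univ.filter (fun i => ∀ j, θ i ⬝ᵥ η x ≤ θ j ⬝ᵥ η x)).Nonempty := by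
    obtain ⟨i, _, hi⟩ := Finset.exists_min_image Finset.univ (fun i => θ i ⬝ᵥ η x)
      ⟨⟨0, Nat.pos_of_ne_zero (NeZero.ne N)⟩, Finset.mem_univ _⟩
    exact ⟨i, Finset.mem_filter.mpr ⟨Finset.mem_univ _, fun j => hi j (Finset.mem_univ j)⟩⟩
  have h := Finset.min'_mem _ hne
  rw [Finset.mem_filter] at h
  exact h.2 j

lemma denom_pos {Ω : Type*} [Fintype Ω] {K N : ℕ} [NeZero N]
    (η : Ω → Fin K → ℝ) (ε : ℝ) (θ : Fin N → Fin K → ℝ) (x : Ω) :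
    0 < ∑ j, Real.exp (-(θ j ⬝ᵥ η x) / ε) :=
  Finset.sum_pos (fun j _ => Real.exp_pos _) ⟨⟨0, Nat.pos_of_ne_zero (NeZero.ne N)⟩,
    Finset.mem_univ _⟩

lemma softp_pos {Ω : Type*} [Fintype Ω] {K N : ℕ} [NeZero N]
    (η : Ω → Fin K → ℝ) (ε : ℝ) (θ : Fin N → Fin K → ℝ) (i : Fin N) (x : Ω) :
    0 < softp η ε θ i x :=
  div_pos (Real.exp_pos _) (denom_pos η ε θ x)

lemma softp_le_one {Ω : Type*} [Fintype Ω] {K N : ℕ} [NeZero N]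
    (η : Ω → Fin K → ℝ) (ε : ℝ) (θ : Fin N → Fin K → ℝ) (i : Fin N) (x : Ω) :
    softp η ε θ i x ≤ 1 := by
  unfold softp
  rw [div_le_one (denom_pos η ε θ x)]
  exact Finset.single_le_sum (f := fun j => Real.exp (-(θ j ⬝ᵥ η x) / ε))
    (fun j _ => (Real.exp_pos _).le) (Finset.mem_univ i)

lemma softp_le_half {Ω : Type*} [Fintype Ω] {K N : ℕ} [NeZero N]
    (η : Ω → Fin K → ℝ) {ε : ℝ} (hε : 0 < ε) (θ : Fin N → Fin K → ℝ) (x : Ω)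
    (G' : Ω → Fin N) (h : hardF η θ x ≠ G' x) :
    softp η ε θ (G' x) x ≤ 1 / 2 := by
  set F := hardF η θ x
  set a := Real.exp (-(θ (G' x) ⬝ᵥ η x) / ε)
  set b := Real.exp (-(θ F ⬝ᵥ η x) / ε)
  have hab : a ≤ b := by
    apply Real.exp_le_exp.mpr
    apply div_le_div_of_nonneg_right _ hε.le
    exact neg_le_neg (hardF_min η θ x (G' x))
  have hsum : a + b ≤ ∑ j, Real.exp (-(θ j ⬝ᵥ η x) / ε) := by
    have : ({G' x, F} : Finset (Fin N)).sum (fun j => Real.exp (-(θ j ⬝ᵥ η x) / ε))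
        ≤ ∑ j, Real.exp (-(θ j ⬝ᵥ η x) / ε) :=
      Finset.sum_le_sum_of_subset_of_nonneg (Finset.subset_univ _)
        (fun j _ _ => (Real.exp_pos _).le)
    rwa [Finset.sum_pair (Ne.symm h)] at this
  have h2a : 2 * a ≤ ∑ j, Real.exp (-(θ j ⬝ᵥ η x) / ε) := by nlinarith
  rw [softp, div_le_div_iff₀ (denom_pos η ε θ x) (by norm_num)]
  nlinarith [Real.exp_pos (-(θ (G' x) ⬝ᵥ η x) / ε)]

theorem Phi_vs_Err {Ω : Type*} [Fintype Ω] [Nonempty Ω] {K N : ℕ} [NeZero N] (hN : 1 < N)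
    (η : Ω → Fin K → ℝ) (G : Ω → Fin N) (ε : ℝ) (hε : 0 < ε) :
    (∀ θ : Fin N → Fin K → ℝ, Phi η G ε θ ≤ -Real.log 2 * Err η G θ) ∧
      (∀ θ : Fin N → Fin K → ℝ, ∀ δ : ℝ, 0 < δ →
        Phi η G ε θ > -δ → Err η G θ < δ / Real.log 2) ∧
      (∀ θ : Fin N → Fin K → ℝ, ∀ δ : ℝ, 0 < δ →
        δ < Real.log 2 / (Fintype.card Ω : ℝ) →
        Phi η G ε θ > -δ → ∀ x : Ω, hardF η θ x = G x) := by
  have hn : (0 : ℝ) < (Fintype.card Ω : ℝ) := by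
    exact_mod_cast Fintype.card_pos
  have hlog2 : (0 : ℝ) < Real.log 2 := Real.log_pos (by norm_num)
  have main : ∀ θ : Fin N → Fin K → ℝ, Phi η G ε θ ≤ -Real.log 2 * Err η G θ := by
    intro θ
    have hsum : ∑ x, Real.log (softp η ε θ (G x) x)
        ≤ ∑ x, (if hardF η θ x ≠ G x then -Real.log 2 else 0) := by
      apply Finset.sum_le_sum
      intro x _
      by_cases h : hardF η θ x ≠ G x
      · rw [if_pos h]
        have := softp_le_half η hε θ x G h
        calc Real.log (softp η ε θ (G x) x) ≤ Real.log (1/2) :=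
              Real.log_le_log (softp_pos η ε θ (G x) x) this
          _ = -Real.log 2 := by
              rw [Real.log_div one_ne_zero (by norm_num), Real.log_one]; ring
      · rw [if_neg h]
        exact Real.log_nonpos (softp_pos η ε θ (G x) x).le (softp_le_one η ε θ (G x) x)
    have hsum2 : ∑ x, (if hardF η θ x ≠ G x then -Real.log 2 else (0:ℝ))
        = -Real.log 2 * ((Finset.univ.filter (fun x : Ω => hardF η θ x ≠ G x)).card : ℝ) := by
      rw [Finset.sum_ite, Finset.sum_const, Finset.sum_const_zero, add_zero,
        nsmul_eq_mul, mul_comm]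
    rw [Phi, Err]
    rw [hsum2] at hsum
    calc (1 / (Fintype.card Ω : ℝ)) * ∑ x, Real.log (softp η ε θ (G x) x)
        ≤ (1 / (Fintype.card Ω : ℝ)) *
          (-Real.log 2 * ((Finset.univ.filter (fun x : Ω => hardF η θ x ≠ G x)).card : ℝ)) :=
          mul_le_mul_of_nonneg_left hsum (by positivity)
      _ = -Real.log 2 * (((Finset.univ.filter (fun x : Ω => hardF η θ x ≠ G x)).card : ℝ)
          / (Fintype.card Ω : ℝ)) := by ring
  refine ⟨main, ?_, ?_⟩
  · intro θ δ hδ hΦ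
    have h1 : -δ < -Real.log 2 * Err η G θ := lt_of_lt_of_le hΦ (main θ)
    rw [lt_div_iff₀ hlog2]
    nlinarith
  · intro θ δ hδ hδ2 hΦ x
    have h1 : Err η G θ < δ / Real.log 2 := by
      have h1 : -δ < -Real.log 2 * Err η G θ := lt_of_lt_of_le hΦ (main θ)
      rw [lt_div_iff₀ hlog2]; nlinarith
    have h2 : δ / Real.log 2 < 1 / (Fintype.card Ω : ℝ) := by
      rw [div_lt_div_iff₀ hlog2 hn]
      rw [lt_div_iff₀ hn] at hδ2
      linarith
    have h3 : ((Finset.univ.filter (fun x : Ω => hardF η θ x ≠ G x)).card : ℝ)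
        / (Fintype.card Ω : ℝ) < 1 / (Fintype.card Ω : ℝ) := lt_trans h1 h2
    have h4 : ((Finset.univ.filter (fun x : Ω => hardF η θ x ≠ G x)).card : ℝ) < 1 := by
      rw [div_lt_div_iff₀ hn hn] at h3
      nlinarith
    have h5 : (Finset.univ.filter (fun x : Ω => hardF η θ x ≠ G x)).card = 0 := by
      exact_mod_cast Nat.lt_one_iff.mp (by exact_mod_cast h4)
    rw [Finset.card_eq_zero, Finset.filter_eq_empty_iff] at h5
    have := h5 (Finset.mem_univ x)
    simpa using this
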